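/- The infinite hexagonal grid graph G satisfies χ'_st(G) = 4. -/

import Mathlib

open SimpleGraph

/-- A star edge-coloring with `k` colors: a proper edge-coloring (adjacent edges get distinct
colors) such that no path with four edges and no cycle with four edges is bichromatic. -/
def IsStarEdgeColoring {V : Type*} (G : SimpleGraph V) {k : ℕ} (C : Sym2 V → Fin k) : Prop :=
  (∀ e₁ ∈ G.edgeSet, ∀ e₂ ∈ G.edgeSet, e₁ ≠ e₂ → (∃ v, v ∈ e₁ ∧ v ∈ e₂) → C e₁ ≠ C e₂) ∧
  (∀ (u v : V) (w : G.Walk u v), w.length = 4 → w.IsPath →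
    ¬ ∃ a b : Fin k, ∀ e ∈ w.edges, C e = a ∨ C e = b) ∧
  (∀ (u : V) (w : G.Walk u u), w.length = 4 → w.IsCycle →
    ¬ ∃ a b : Fin k, ∀ e ∈ w.edges, C e = a ∨ C e = b)

/-- The star chromatic index: the least `k` admitting a star edge-coloring with `k` colors. -/
noncomputable def starChromaticIndex {V : Type*} (G : SimpleGraph V) : ℕ :=
  sInf {k | ∃ C : Sym2 V → Fin k, IsStarEdgeColoring G C}

/-- The infinite hexagonal (honeycomb) grid, in brick-wall coordinates on `ℤ × ℤ`:
vertical edges everywhere, and a horizontal edge from `(x, y)` to `(x + 1, y)` exactly when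
`x + y` is even, so that every vertex has degree 3 and all faces are hexagons. -/
def hexGrid : SimpleGraph (ℤ × ℤ) :=
  SimpleGraph.fromRel (fun p q =>
    (p.1 = q.1 ∧ q.2 = p.2 + 1) ∨ (p.2 = q.2 ∧ q.1 = p.1 + 1 ∧ Even (p.1 + p.2)))

/-!
Reducing `(x, y)` to `(y mod 4, x mod 2)` maps the hexagonal grid onto the prism
`C₄ □ K₂ ≅ Q₃` and is injective on every neighbourhood. For a proper edge-colouring, being a
star colouring only forbids non-backtracking walks of length four coloured `a b a b`, and such
walks map to walks of the same kind; so a star 4-edge-colouring of `Q₃`, checked by exhaustion,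
pulls back to the grid. Conversely, with at most three colours every vertex of a
cubic graph sees all of them, so an alternating walk `a b a b` can always be grown.
-/

section StarEdgeColoring

variable {V : Type*} {G : SimpleGraph V} {k : ℕ} {C : Sym2 V → Fin k}

def IsProperEdgeColoring (G : SimpleGraph V) (C : Sym2 V → Fin k) : Prop :=
  ∀ ⦃u v w⦄, G.Adj u v → G.Adj v w → u ≠ w → C s(u, v) ≠ C s(v, w)

def NoAlternatingFourWalk (G : SimpleGraph V) (C : Sym2 V → Fin k) : Prop :=
  ∀ ⦃v₀ v₁⦄, G.Adj v₀ v₁ → ∀ ⦃v₂⦄, G.Adj v₁ v₂ → v₀ ≠ v₂ → ∀ ⦃v₃⦄, G.Adj v₂ v₃ → v₁ ≠ v₃ →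
    ∀ ⦃v₄⦄, G.Adj v₃ v₄ → v₂ ≠ v₄ → C s(v₀, v₁) = C s(v₂, v₃) → C s(v₁, v₂) ≠ C s(v₃, v₄)

theorem isProperEdgeColoring_iff :
    IsProperEdgeColoring G C ↔ ∀ e₁ ∈ G.edgeSet, ∀ e₂ ∈ G.edgeSet, e₁ ≠ e₂ →
      (∃ v, v ∈ e₁ ∧ v ∈ e₂) → C e₁ ≠ C e₂ := by
  constructor
  · rintro hC e₁ he₁ e₂ he₂ hne ⟨v, hv₁, hv₂⟩
    obtain ⟨u, rfl⟩ := Sym2.mem_iff_exists.1 hv₁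
    obtain ⟨w, rfl⟩ := Sym2.mem_iff_exists.1 hv₂
    rw [Sym2.eq_swap]
    exact hC (G.adj_symm he₁) he₂ fun huw => hne (huw ▸ rfl)
  · intro hC u v w huv hvw huw
    refine hC _ huv _ hvw ?_ ⟨v, Sym2.mem_mk_right u v, Sym2.mem_mk_left v w⟩
    rw [Sym2.eq_swap, Ne, Sym2.congr_right]
    exact huw

theorem IsProperEdgeColoring.ne_of_adj (hC : IsProperEdgeColoring G C) {v a b : V}
    (ha : G.Adj v a) (hb : G.Adj v b) (hab : a ≠ b) : C s(v, a) ≠ C s(v, b) := by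
  rw [Sym2.eq_swap]
  exact hC ha.symm hb hab

theorem SimpleGraph.Walk.exists_eq_cons_four {u v : V} (p : G.Walk u v) (hp : p.length = 4) :
    ∃ (v₁ v₂ v₃ : V) (h₁ : G.Adj u v₁) (h₂ : G.Adj v₁ v₂) (h₃ : G.Adj v₂ v₃) (h₄ : G.Adj v₃ v),
      p = .cons h₁ (.cons h₂ (.cons h₃ (.cons h₄ .nil))) := by
  match p, hp with
  | .cons h₁ (.cons h₂ (.cons h₃ (.cons h₄ .nil))), _ => exact ⟨_, _, _, h₁, h₂, h₃, h₄, rfl⟩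

theorem not_bichromatic_of_isTrail (hC : IsProperEdgeColoring G C)
    (hW : NoAlternatingFourWalk G C) {u v : V} (p : G.Walk u v) (hp : p.IsTrail)
    (hl : p.length = 4) : ¬ ∃ a b : Fin k, ∀ e ∈ p.edges, C e = a ∨ C e = b := by
  obtain ⟨v₁, v₂, v₃, h₁, h₂, h₃, h₄, rfl⟩ := p.exists_eq_cons_four hl
  rintro ⟨a, b, hab⟩
  simp only [Walk.edges_cons, Walk.edges_nil, List.mem_cons, List.not_mem_nil, or_false,
    forall_eq_or_imp, forall_eq] at hab
  have hnodup := hp.edges_nodup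
  simp only [Walk.edges_cons, Walk.edges_nil, List.nodup_cons, List.mem_cons, List.not_mem_nil,
    or_false, not_or] at hnodup
  have h₀₂ : u ≠ v₂ := by rintro rfl; exact hnodup.1.1 Sym2.eq_swap
  have h₁₃ : v₁ ≠ v₃ := by rintro rfl; exact hnodup.2.1.1 Sym2.eq_swap
  have h₂₄ : v₂ ≠ v := by rintro rfl; exact hnodup.2.2.1 Sym2.eq_swap
  have c₁₂ := hC h₁ h₂ h₀₂
  have c₂₃ := hC h₂ h₃ h₁₃
  have c₃₄ := hC h₃ h₄ h₂₄
  refine hW h₁ h₂ h₀₂ h₃ h₁₃ h₄ h₂₄ ?_ ?_ <;> grind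

theorem isStarEdgeColoring_iff :
    IsStarEdgeColoring G C ↔ IsProperEdgeColoring G C ∧ NoAlternatingFourWalk G C := by
  refine ⟨fun ⟨hproper, hpath, hcycle⟩ => ?_, fun ⟨hC, hW⟩ => ?_⟩
  · have hC : IsProperEdgeColoring G C := isProperEdgeColoring_iff.2 hproper
    refine ⟨hC, fun v₀ v₁ h₁ v₂ h₂ h₀₂ v₃ h₃ h₁₃ v₄ h₄ h₂₄ c₁₃ c₂₄ => ?_⟩
    -- closing up after three steps would put two edges of one colour at a vertex
    have h₀₃ : v₀ ≠ v₃ := by rintro rfl; exact hC h₃ h₁ h₂.ne' c₁₃.symm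
    have h₁₄ : v₁ ≠ v₄ := by rintro rfl; exact hC h₄ h₂ h₃.ne' c₂₄.symm
    have hab : ∀ e ∈ (Walk.cons h₁ (.cons h₂ (.cons h₃ (.cons h₄ .nil)))).edges,
        C e = C s(v₀, v₁) ∨ C e = C s(v₁, v₂) := by
      intro e he
      simp only [Walk.edges_cons, Walk.edges_nil, List.mem_cons, List.not_mem_nil, or_false] at he
      rcases he with rfl | rfl | rfl | rfl
      exacts [.inl rfl, .inr rfl, .inl c₁₃.symm, .inr c₂₄.symm]
    by_cases h₀₄ : v₀ = v₄
    · subst h₀₄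
      refine hcycle v₀ _ rfl ?_ ⟨_, _, hab⟩
      rw [Walk.cons_isCycle_iff, Walk.isPath_def]
      simp only [Walk.support_cons, Walk.support_nil, Walk.edges_cons, Walk.edges_nil,
        List.nodup_cons, List.mem_cons, List.not_mem_nil, Sym2.eq_iff]
      grind [h₁.ne, h₂.ne, h₃.ne, h₄.ne]
    · refine hpath v₀ v₄ _ rfl ?_ ⟨_, _, hab⟩
      rw [Walk.isPath_def]
      simp only [Walk.support_cons, Walk.support_nil, List.nodup_cons, List.mem_cons,
        List.not_mem_nil]
      grind [h₁.ne, h₂.ne, h₃.ne, h₄.ne]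
  · exact ⟨isProperEdgeColoring_iff.1 hC,
      fun _ _ p hl hp => not_bichromatic_of_isTrail hC hW p hp.isTrail hl,
      fun _ p hl hp => not_bichromatic_of_isTrail hC hW p hp.isTrail hl⟩

theorem IsStarEdgeColoring.comap {W : Type*} {H : SimpleGraph W} {c : Sym2 W → Fin k}
    (hc : IsStarEdgeColoring H c) (φ : G →g H)
    (hφ : ∀ ⦃u v w⦄, G.Adj u v → G.Adj v w → u ≠ w → φ u ≠ φ w) :
    IsStarEdgeColoring G (c ∘ Sym2.map φ) := by
  obtain ⟨hc, hW⟩ := isStarEdgeColoring_iff.1 hc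
  refine isStarEdgeColoring_iff.2 ⟨fun u v w h₁ h₂ huw => ?_,
    fun v₀ v₁ h₁ v₂ h₂ h₀₂ v₃ h₃ h₁₃ v₄ h₄ h₂₄ => ?_⟩
  · exact hc (φ.map_adj h₁) (φ.map_adj h₂) (hφ h₁ h₂ huw)
  · exact hW (φ.map_adj h₁) (φ.map_adj h₂) (hφ h₁ h₂ h₀₂) (φ.map_adj h₃) (hφ h₂ h₃ h₁₃)
      (φ.map_adj h₄) (hφ h₃ h₄ h₂₄)

theorem exists_three_adj_of_three_le_encard {v : V} (hv : 3 ≤ (G.neighborSet v).encard) :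
    ∃ a b c, G.Adj v a ∧ G.Adj v b ∧ G.Adj v c ∧ a ≠ b ∧ a ≠ c ∧ b ≠ c := by
  obtain ⟨t, hts, ht⟩ := Set.exists_subset_encard_eq hv
  obtain ⟨a, b, c, hab, hac, hbc, rfl⟩ := Set.encard_eq_three.1 ht
  exact ⟨a, b, c, hts (by simp), hts (by simp), hts (by simp), hab, hac, hbc⟩

theorem four_le_of_isStarEdgeColoring [Nonempty V] (hG : ∀ v, 3 ≤ (G.neighborSet v).encard)
    (hC : IsStarEdgeColoring G C) : 4 ≤ k := by
  obtain ⟨hC, hW⟩ := isStarEdgeColoring_iff.1 hC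
  by_contra! hk
  have all_colors : ∀ v (c : Fin k), ∃ w, G.Adj v w ∧ C s(v, w) = c := by
    intro v c
    obtain ⟨a, b, d, ha, hb, hd, hab, had, hbd⟩ := exists_three_adj_of_three_le_encard (hG v)
    have hab := hC.ne_of_adj ha hb hab
    have had := hC.ne_of_adj ha hd had
    have hbd := hC.ne_of_adj hb hd hbd
    have : c = C s(v, a) ∨ c = C s(v, b) ∨ c = C s(v, d) := by
      simp only [Ne, Fin.ext_iff] at hab had hbd ⊢
      omega
    rcases this with rfl | rfl | rfl
    exacts [⟨a, ha, rfl⟩, ⟨b, hb, rfl⟩, ⟨d, hd, rfl⟩]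
  obtain ⟨v₁⟩ := ‹Nonempty V›
  obtain ⟨v₀, v₂, -, h₁, h₂, -, h₀₂, -, -⟩ := exists_three_adj_of_three_le_encard (hG v₁)
  have c₀₂ := hC.ne_of_adj h₁ h₂ h₀₂
  obtain ⟨v₃, h₃, c₁₃⟩ := all_colors v₂ (C s(v₁, v₀))
  obtain ⟨v₄, h₄, c₂₄⟩ := all_colors v₃ (C s(v₁, v₂))
  have h₁₃ : v₁ ≠ v₃ := by
    rintro rfl
    rw [Sym2.eq_swap] at c₁₃
    exact c₀₂ c₁₃.symm
  have h₂₄ : v₂ ≠ v₄ := by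
    rintro rfl
    rw [Sym2.eq_swap, c₁₃] at c₂₄
    exact c₀₂ c₂₄
  refine hW h₁.symm h₂ h₀₂ h₃ h₁₃ h₄ h₂₄ ?_ c₂₄.symm
  rw [c₁₃, Sym2.eq_swap]

end StarEdgeColoring

instance {α β : Type*} {G : SimpleGraph α} {H : SimpleGraph β} [DecidableEq α] [DecidableEq β]
    [DecidableRel G.Adj] [DecidableRel H.Adj] : DecidableRel (G □ H).Adj :=
  fun _ _ => decidable_of_iff' _ boxProd_adj

-- On `C₄ □ K₂`, the edge from `(r, p)` to `(r + 1, p)` gets colour `r + 2 + p` and the rung at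
-- `r` gets colour `r`.
def cubeColoring : Sym2 (Fin 4 × Fin 2) → Fin 4 :=
  Sym2.lift ⟨fun u v =>
    if v = (u.1 + 1, u.2) then u.1 + if u.2 = 0 then 2 else 3
    else if u = (v.1 + 1, v.2) then v.1 + if v.2 = 0 then 2 else 3
    else min u.1 v.1, by decide⟩

set_option synthInstance.maxHeartbeats 400000 in
set_option synthInstance.maxSize 1000 in
theorem isStarEdgeColoring_cubeColoring :
    IsStarEdgeColoring (cycleGraph 4 □ (⊤ : SimpleGraph (Fin 2))) cubeColoring :=
  isStarEdgeColoring_iff.2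
    ⟨by unfold IsProperEdgeColoring; decide, by unfold NoAlternatingFourWalk; decide⟩

open scoped Fin.CommRing

def hexSide (v : ℤ × ℤ) : ℤ × ℤ := if Even (v.1 + v.2) then (v.1 + 1, v.2) else (v.1 - 1, v.2)

theorem hexGrid_adj_iff {v w : ℤ × ℤ} :
    hexGrid.Adj v w ↔ w = (v.1, v.2 + 1) ∨ w = (v.1, v.2 - 1) ∨ w = hexSide v := by
  obtain ⟨x, y⟩ := v
  obtain ⟨a, b⟩ := w
  simp only [hexGrid, hexSide, fromRel_adj, Int.even_iff]
  split_ifs <;> simp only [ne_eq, Prod.mk.injEq] <;> omega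

def hexCover : hexGrid →g cycleGraph 4 □ (⊤ : SimpleGraph (Fin 2)) where
  toFun v := ((v.2 : Fin 4), (v.1 : Fin 2))
  map_rel' := by
    intro v w h
    rw [hexGrid_adj_iff] at h
    rw [boxProd_adj, cycleGraph_adj, top_adj]
    rcases h with rfl | rfl | rfl
    · left; push_cast; simp
    · left; push_cast; simp
    · right; unfold hexSide; split_ifs <;> push_cast <;> simp [eq_comm (a := (v.1 : Fin 2))]

theorem hexCover_eq_hexCover_iff {u w : ℤ × ℤ} :
    hexCover u = hexCover w ↔ u.2 % 4 = w.2 % 4 ∧ u.1 % 2 = w.1 % 2 := by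
  simp only [hexCover, RelHom.coeFn_mk, Prod.ext_iff, CharP.intCast_eq_intCast (Fin 4) 4,
    CharP.intCast_eq_intCast (Fin 2) 2, Int.ModEq, Nat.cast_ofNat]

theorem hexCover_ne_of_adj {u v w : ℤ × ℤ} (hu : hexGrid.Adj u v) (hw : hexGrid.Adj v w)
    (huw : u ≠ w) : hexCover u ≠ hexCover w := by
  rw [hexGrid.adj_comm, hexGrid_adj_iff] at hu
  rw [hexGrid_adj_iff] at hw
  rw [Ne, hexCover_eq_hexCover_iff]
  simp only [hexSide, Int.even_iff, ne_eq, Prod.ext_iff] at *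
  split_ifs at hu hw <;> omega

theorem hexGrid_neighborSet (v : ℤ × ℤ) :
    hexGrid.neighborSet v = {(v.1, v.2 + 1), (v.1, v.2 - 1), hexSide v} := by
  ext w
  simp [hexGrid_adj_iff]

theorem hexGrid_encard_neighborSet (v : ℤ × ℤ) : (hexGrid.neighborSet v).encard = 3 := by
  rw [hexGrid_neighborSet, Set.encard_eq_three]
  unfold hexSide
  split_ifs <;> refine ⟨_, _, _, ?_, ?_, ?_, rfl⟩ <;> simp only [ne_eq, Prod.mk.injEq] <;> omega

theorem stmt_17 : starChromaticIndex hexGrid = 4 := by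
  have hC : IsStarEdgeColoring hexGrid (cubeColoring ∘ Sym2.map hexCover) :=
    isStarEdgeColoring_cubeColoring.comap hexCover fun _ _ _ => hexCover_ne_of_adj
  refine le_antisymm (Nat.sInf_le ⟨_, hC⟩) (le_csInf ⟨4, _, hC⟩ ?_)
  rintro k ⟨C, hC⟩
  exact four_le_of_isStarEdgeColoring (fun v => (hexGrid_encard_neighborSet v).ge) hC
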